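/- (Corollary 4.2, RW retains a copy of itself under R_p.) Let m, k, r be positive integers, n = m(k+1)r, and let p ∈ (0,1] satisfy p·r/2 ≥ 1. Let ρ be drawn from R_p over restrictions of the n variables of RW_{m,k,r}. Then with probability at least 1 − m·(k+1)·exp(−p·r/8), the restricted function RW_{m,k,r}↾ρ contains a perfect copy of RW_{m,k,r'} where r' = ⌊p·r/2⌋. -/

import Mathlib

open Finset

/-! ### AC⁰ circuits: unbounded fan-in AND/OR gates over literals -/

inductive AC0 (ι : Type) : Type
  | lit : ι → Bool → AC0 ι
  | and : (a : ℕ) → (Fin a → AC0 ι) → AC0 ι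
  | or  : (a : ℕ) → (Fin a → AC0 ι) → AC0 ι

namespace AC0

variable {ι : Type}

def eval : AC0 ι → (ι → Bool) → Bool
  | .lit i b, x => if b then x i else !(x i)
  | .and _ f, x => decide (∀ j, (f j).eval x = true)
  | .or _ f, x => decide (∃ j, (f j).eval x = true)

/-- Number of gates, literals included in the count. -/
def size : AC0 ι → ℕ
  | .lit _ _ => 1
  | .and _ f => 1 + ∑ j, (f j).size
  | .or _ f => 1 + ∑ j, (f j).size

def depth : AC0 ι → ℕ
  | .lit _ _ => 0
  | .and _ f => 1 + Finset.univ.sup fun j => (f j).depth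
  | .or _ f => 1 + Finset.univ.sup fun j => (f j).depth

end AC0

/-- `g` is an arbitrary symmetric Boolean function: it depends only on the
number of `true`s among its inputs. -/
def IsSymFun {a : ℕ} (g : (Fin a → Bool) → Bool) : Prop :=
  ∃ φ : ℕ → Bool, ∀ y, g y = φ (Finset.univ.filter fun i => y i = true).card

/-- `g` is an arbitrary linear threshold function: `g y = 1` iff `∑ wᵢ yᵢ ≥ θ`. -/
def IsThrFun {a : ℕ} (g : (Fin a → Bool) → Bool) : Prop :=
  ∃ (w : Fin a → ℝ) (θ : ℝ), ∀ y, g y = decide (θ ≤ ∑ i, if y i = true then w i else 0)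

/-- `F` is computed by a SYM∘AC⁰ circuit: a symmetric output gate fed by
AC⁰ circuits of depth at most `d`, with at most `S` gates in total
(the top gate and all gates of the feeding circuits, literals included). -/
def SymOnAC0 {ι : Type} (S : ℝ) (d : ℕ) (F : (ι → Bool) → Bool) : Prop :=
  ∃ (a : ℕ) (g : (Fin a → Bool) → Bool) (C : Fin a → AC0 ι),
    IsSymFun g ∧ (∀ i, (C i).depth ≤ d) ∧ (((1 + ∑ i, (C i).size : ℕ) : ℝ) ≤ S) ∧
    ∀ x, F x = g fun i => (C i).eval x

/-- `F` is computed by a THR∘AC⁰ circuit, analogously. -/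
def ThrOnAC0 {ι : Type} (S : ℝ) (d : ℕ) (F : (ι → Bool) → Bool) : Prop :=
  ∃ (a : ℕ) (g : (Fin a → Bool) → Bool) (C : Fin a → AC0 ι),
    IsThrFun g ∧ (∀ i, (C i).depth ≤ d) ∧ (((1 + ∑ i, (C i).size : ℕ) : ℝ) ≤ S) ∧
    ∀ x, F x = g fun i => (C i).eval x

/-! ### General circuits with AND/OR gates and arbitrary SYM/THR gates -/

inductive GenCircuit (ι : Type) : Type
  | lit : ι → Bool → GenCircuit ι
  | and : (a : ℕ) → (Fin a → GenCircuit ι) → GenCircuit ι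
  | or  : (a : ℕ) → (Fin a → GenCircuit ι) → GenCircuit ι
  | sym : (a : ℕ) → (ℕ → Bool) → (Fin a → GenCircuit ι) → GenCircuit ι
  | thr : (a : ℕ) → (Fin a → ℝ) → ℝ → (Fin a → GenCircuit ι) → GenCircuit ι

namespace GenCircuit

variable {ι : Type}

noncomputable def eval : GenCircuit ι → (ι → Bool) → Bool
  | .lit i b, x => if b then x i else !(x i)
  | .and _ f, x => decide (∀ j, (f j).eval x = true)
  | .or _ f, x => decide (∃ j, (f j).eval x = true)
  | .sym _ φ f, x => φ (Finset.univ.filter fun j => (f j).eval x = true).card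
  | .thr _ w θ f, x => decide (θ ≤ ∑ j, if (f j).eval x = true then w j else 0)

/-- Number of gates, literals included in the count. -/
def size : GenCircuit ι → ℕ
  | .lit _ _ => 1
  | .and _ f => 1 + ∑ j, (f j).size
  | .or _ f => 1 + ∑ j, (f j).size
  | .sym _ _ f => 1 + ∑ j, (f j).size
  | .thr _ _ _ f => 1 + ∑ j, (f j).size

def depth : GenCircuit ι → ℕ
  | .lit _ _ => 0
  | .and _ f => 1 + Finset.univ.sup fun j => (f j).depth
  | .or _ f => 1 + Finset.univ.sup fun j => (f j).depth
  | .sym _ _ f => 1 + Finset.univ.sup fun j => (f j).depth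
  | .thr _ _ _ f => 1 + Finset.univ.sup fun j => (f j).depth

/-- The number of SYM and THR gates in the circuit. -/
def symThrCount : GenCircuit ι → ℕ
  | .lit _ _ => 0
  | .and _ f => ∑ j, (f j).symThrCount
  | .or _ f => ∑ j, (f j).symThrCount
  | .sym _ _ f => 1 + ∑ j, (f j).symThrCount
  | .thr _ _ _ f => 1 + ∑ j, (f j).symThrCount

end GenCircuit

/-! ### Restrictions and distributions -/

/-- Apply a restriction (`none` = `*` = free) to an input. -/
def applyR {ι : Type} (ρ : ι → Option Bool) (x : ι → Bool) : ι → Bool :=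
  fun i => (ρ i).getD (x i)

/-- The restricted function `f↾ρ`. -/
def restrictF {ι : Type} (f : (ι → Bool) → Bool) (ρ : ι → Option Bool) :
    (ι → Bool) → Bool :=
  fun x => f (applyR ρ x)

def freeCount {ι : Type} [Fintype ι] (ρ : ι → Option Bool) : ℕ :=
  (Finset.univ.filter fun i => ρ i = none).card

open Classical in
/-- Probability of the event `P` under the (finitely supported) density `R`. -/
noncomputable def prOf {α : Type} [Fintype α] (R : α → ℝ) (P : α → Prop) : ℝ :=
  ∑ a, if P a then R a else 0

/-- A density `R` on restrictions is a fair distribution: it is a probability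
distribution, and drawing `ρ ← R` and filling in all `*`s with independent
uniform bits yields the uniform distribution on `{0,1}^n`. -/
def IsFair {ι : Type} [Fintype ι] [DecidableEq ι] (R : (ι → Option Bool) → ℝ) : Prop :=
  (∀ ρ, 0 ≤ R ρ) ∧ ((∑ ρ : ι → Option Bool, R ρ) = 1) ∧
  ∀ x : ι → Bool,
    (∑ ρ : ι → Option Bool, R ρ * if applyR ρ x = x then ((1 : ℝ) / 2) ^ freeCount ρ else 0)
      = ((1 : ℝ) / 2) ^ Fintype.card ι

/-- The density of the random restriction `R_p`: each coordinate independently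
is `*` with probability `p`, and `0` or `1` each with probability `(1-p)/2`. -/
noncomputable def RpDensity {ι : Type} [Fintype ι] (p : ℝ) (ρ : ι → Option Bool) : ℝ :=
  ∏ i, (ρ i).elim p (fun _ => (1 - p) / 2)

/-- The density of the random subset `L ⊆_q ι` (as an indicator function):
each element is included independently with probability `q`. -/
noncomputable def subsetDensity {ι : Type} [Fintype ι] (q : ℝ) (L : ι → Bool) : ℝ :=
  ∏ i, if L i then q else 1 - q

/-- The fraction of inputs on which `F` and `H` agree. -/
noncomputable def agreePr {ι : Type} [Fintype ι] [DecidableEq ι]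
    (F H : (ι → Bool) → Bool) : ℝ :=
  ((Finset.univ.filter fun x : ι → Bool => F x = H x).card : ℝ) / 2 ^ Fintype.card ι

/-- `G : {0,1}^t → {0,1}^ι` ε-fools the Boolean function `f`. -/
def Fools {ι : Type} [Fintype ι] [DecidableEq ι] {t : ℕ}
    (G : (Fin t → Bool) → (ι → Bool)) (f : (ι → Bool) → Bool) (ε : ℝ) : Prop :=
  |(∑ s : Fin t → Bool, if f (G s) = true then (1 : ℝ) else 0) / 2 ^ t
    - (∑ x : ι → Bool, if f x = true then (1 : ℝ) else 0) / 2 ^ Fintype.card ι| ≤ ε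

/-! ### Decision trees -/

inductive DTree (ι : Type) (α : Type) : Type
  | leaf : α → DTree ι α
  | node : ι → DTree ι α → DTree ι α → DTree ι α

namespace DTree

variable {ι α : Type}

def depth : DTree ι α → ℕ
  | .leaf _ => 0
  | .node _ t0 t1 => 1 + max t0.depth t1.depth

def evalWith (ev : α → (ι → Bool) → Bool) : DTree ι α → (ι → Bool) → Bool
  | .leaf a, x => ev a x
  | .node i t0 t1, x => if x i then t1.evalWith ev x else t0.evalWith ev x

def leaves : DTree ι α → List α
  | .leaf a => [a]
  | .node _ t0 t1 => t0.leaves ++ t1.leaves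

end DTree

/-- Evaluation of an ordinary decision tree with Boolean leaves. -/
def evalDT {ι : Type} (T : DTree ι Bool) (x : ι → Bool) : Bool :=
  T.evalWith (fun b _ => b) x

/-- `F` is computed by a `(t, C)`-decision tree: a depth-`t` decision tree
whose leaves are labeled by functions from the class `C`. -/
def ComputedByClassDT {ι : Type} (t : ℕ) (C : ((ι → Bool) → Bool) → Prop)
    (F : (ι → Bool) → Bool) : Prop :=
  ∃ T : DTree ι ((ι → Bool) → Bool), T.depth ≤ t ∧ (∀ g ∈ T.leaves, C g) ∧
    ∀ x, F x = T.evalWith (fun g => g) x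

/-! ### SYM∘AND and THR∘AND circuits -/

/-- `F` is computed by a SYM∘AND circuit with at most `S` bottom AND gates
(terms), each a conjunction of at most `kb` literals. -/
def IsSymAnd {ι : Type} (S kb : ℝ) (F : (ι → Bool) → Bool) : Prop :=
  ∃ (a : ℕ) (g : (Fin a → Bool) → Bool) (T : Fin a → List (ι × Bool)),
    IsSymFun g ∧ ((a : ℝ) ≤ S) ∧ (∀ i, ((T i).length : ℝ) ≤ kb) ∧
    ∀ x, F x = g fun i => (T i).all fun l => x l.1 == l.2

/-- `F` is computed by a THR∘AND circuit, analogously. -/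
def IsThrAnd {ι : Type} (S kb : ℝ) (F : (ι → Bool) → Bool) : Prop :=
  ∃ (a : ℕ) (g : (Fin a → Bool) → Bool) (T : Fin a → List (ι × Bool)),
    IsThrFun g ∧ ((a : ℝ) ≤ S) ∧ (∀ i, ((T i).length : ℝ) ≤ kb) ∧
    ∀ x, F x = g fun i => (T i).all fun l => x l.1 == l.2

/-! ### The Razborov–Wigderson and generalized inner product functions -/

/-- Parity (XOR) of a finite family of bits. -/
def bparity {α : Type} [Fintype α] (f : α → Bool) : Bool :=
  decide ((Finset.univ.filter fun a => f a = true).card % 2 = 1)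

/-- `RW_{m,k,r}(x) = ⊕_{i∈[m]} ⋀_{j∈[k+1]} ⊕_{ℓ∈[r]} x_{i,j,ℓ}`. -/
def RW (m k r : ℕ) (x : Fin m × Fin (k + 1) × Fin r → Bool) : Bool :=
  bparity fun i : Fin m =>
    decide (∀ j : Fin (k + 1), bparity (fun ℓ : Fin r => x (i, j, ℓ)) = true)

/-- `GIP_{m',k'}(x) = ⊕_{i∈[m']} ⋀_{j∈[k']} x_{i,j}`. -/
def GIP (m' k' : ℕ) (x : Fin m' × Fin k' → Bool) : Bool :=
  bparity fun i : Fin m' => decide (∀ j : Fin k', x (i, j) = true)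

/-- `g` contains a perfect copy of `GIP_{m',k'}`: there is a restriction `κ`
whose free variables are exactly the range of an injection `e` from the GIP
index set, and bits `b`, `bb i j`, such that `g↾κ` is the corresponding
shifted/negated copy of GIP. -/
def ContainsGIP {ι : Type} (m' k' : ℕ) (g : (ι → Bool) → Bool) : Prop :=
  ∃ (κ : ι → Option Bool) (e : Fin m' × Fin k' → ι) (b : Bool)
    (bb : Fin m' × Fin k' → Bool),
    Function.Injective e ∧ (∀ v, κ v = none ↔ v ∈ Set.range e) ∧
    ∀ x : ι → Bool,
      g (applyR κ x) =
        xor b (bparity fun i : Fin m' =>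
          decide (∀ j : Fin k', xor (bb (i, j)) (x (e (i, j))) = true))

/-- `g` contains a perfect copy of `RW_{m',k',r'}`, analogously. -/
def ContainsRW {ι : Type} (m' k' r' : ℕ) (g : (ι → Bool) → Bool) : Prop :=
  ∃ (κ : ι → Option Bool) (e : Fin m' × Fin (k' + 1) × Fin r' → ι) (b : Bool)
    (bb : Fin m' × Fin (k' + 1) → Bool),
    Function.Injective e ∧ (∀ v, κ v = none ↔ v ∈ Set.range e) ∧
    ∀ x : ι → Bool,
      g (applyR κ x) =
        xor b (bparity fun i : Fin m' =>
          decide (∀ j : Fin (k' + 1),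
            xor (bb (i, j)) (bparity fun ℓ : Fin r' => x (e (i, j, ℓ))) = true))

/-
Each of the `m(k+1)` blocks `{(i, j, ℓ) : ℓ ∈ [r]}` of `RW_{m,k,r}` keeps at least
`r' = ⌊pr/2⌋` free variables except with probability `exp(-pr/8)`: by Markov's inequality applied to
`2^(-#free)`, whose expectation factorises as `(1 - p/2)^r`. When every block has `r'` free
variables, choose `r'` of them in each block and fix all other free variables to `0`; the
parity of a block is then the parity of its `r'` chosen variables shifted by the parity of its
fixed bits, which is a perfect copy of `RW_{m,k,r'}`. A union bound over the blocks finishes.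
-/

section Probability

variable {α : Type} [Fintype α]

lemma prOf_mono {R : α → ℝ} (hR : ∀ a, 0 ≤ R a) {P Q : α → Prop} (hPQ : ∀ a, P a → Q a) :
    prOf R P ≤ prOf R Q := by
  refine Finset.sum_le_sum fun a _ => ?_
  by_cases hP : P a
  · simp [hP, hPQ a hP]
  · simp only [hP, if_false]
    split_ifs <;> simp [hR a]

lemma prOf_not {R : α → ℝ} (hR : ∑ a, R a = 1) (P : α → Prop) :
    prOf R (fun a => ¬ P a) = 1 - prOf R P := by
  unfold prOf
  rw [eq_sub_iff_add_eq, ← Finset.sum_add_distrib, ← hR]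
  refine Finset.sum_congr rfl fun a _ => ?_
  by_cases hP : P a <;> simp [hP]

lemma prOf_exists_le_sum {ι : Type} [Fintype ι] {R : α → ℝ} (hR : ∀ a, 0 ≤ R a)
    (P : ι → α → Prop) : prOf R (fun a => ∃ i, P i a) ≤ ∑ i, prOf R (P i) := by
  classical
  unfold prOf
  rw [Finset.sum_comm]
  refine Finset.sum_le_sum fun a _ => ?_
  split_ifs with h
  · obtain ⟨i, hi⟩ := h
    calc R a = if P i a then R a else 0 := (if_pos hi).symm
      _ ≤ ∑ j, if P j a then R a else 0 :=
        Finset.single_le_sum (f := fun j => if P j a then R a else 0)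
          (fun j _ => by split_ifs <;> simp [hR a]) (Finset.mem_univ i)
  · exact Finset.sum_nonneg fun j _ => by split_ifs <;> simp [hR a]

end Probability

section RandomRestriction

variable {ι : Type} [Fintype ι]

lemma RpDensity_nonneg {p : ℝ} (hp0 : 0 ≤ p) (hp1 : p ≤ 1) (ρ : ι → Option Bool) :
    0 ≤ RpDensity p ρ :=
  Finset.prod_nonneg fun v _ => by
    cases ρ v with
    | none => exact hp0
    | some _ => simp only [Option.elim_some]; linarith

lemma sum_RpDensity [DecidableEq ι] (p : ℝ) : ∑ ρ : ι → Option Bool, RpDensity p ρ = 1 := by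
  unfold RpDensity
  rw [← Fintype.prod_sum fun (_ : ι) (o : Option Bool) => o.elim p fun _ => (1 - p) / 2]
  refine Finset.prod_eq_one fun v _ => ?_
  simp only [Fintype.sum_option, Fintype.sum_bool, Option.elim_none, Option.elim_some]
  ring

lemma prOf_card_free_lt_le [DecidableEq ι] {p : ℝ} (hp0 : 0 ≤ p) (hp1 : p ≤ 1)
    (S : Finset ι) (t : ℕ) :
    prOf (RpDensity p) (fun ρ : ι → Option Bool => #(S.filter fun v => ρ v = none) < t) ≤
      2 ^ t * (1 - p / 2) ^ #S := by
  set free : (ι → Option Bool) → ℕ := fun ρ => #(S.filter fun v => ρ v = none)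
  -- `R_p` reweighted by `1/2` per free variable of `S`: its total mass is `E[2^(-free)]`.
  set w : ι → Option Bool → ℝ := fun v o =>
    (o.elim p fun _ => (1 - p) / 2) * if v ∈ S ∧ o = none then 1 / 2 else 1
  have tilt : ∀ ρ : ι → Option Bool, ∏ v, w v (ρ v) = RpDensity p ρ * (1 / 2) ^ free ρ := by
    intro ρ
    rw [Finset.prod_mul_distrib, ← Finset.prod_filter, Finset.prod_const]
    congr 2
    simp only [free]
    congr 1
    ext v
    simp
  have moment : ∑ ρ : ι → Option Bool, ∏ v, w v (ρ v) = (1 - p / 2) ^ #S := by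
    rw [← Fintype.prod_sum w, ← Finset.prod_const, ← Fintype.prod_ite_mem S]
    refine Finset.prod_congr rfl fun v _ => ?_
    by_cases hv : v ∈ S <;> simp [w, hv] <;> ring
  calc prOf (RpDensity p) (fun ρ => free ρ < t)
      ≤ ∑ ρ, 2 ^ t * (RpDensity p ρ * (1 / 2) ^ free ρ) := by
        refine Finset.sum_le_sum fun ρ _ => ?_
        have hR := RpDensity_nonneg hp0 hp1 ρ
        split_ifs with h
        · have : (1 : ℝ) ≤ 2 ^ t * (1 / 2) ^ free ρ :=
            calc (1 : ℝ) = 2 ^ free ρ * (1 / 2) ^ free ρ := by rw [← mul_pow]; norm_num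
              _ ≤ 2 ^ t * (1 / 2) ^ free ρ := by gcongr; norm_num
          nlinarith
        · positivity
    _ = 2 ^ t * (1 - p / 2) ^ #S := by simp_rw [← tilt, ← Finset.mul_sum, moment]

lemma prOf_card_free_comp_lt_le [DecidableEq ι] {κ : Type} [Fintype κ] (f : κ ↪ ι) {p : ℝ}
    (hp0 : 0 ≤ p) (hp1 : p ≤ 1) (t : ℕ) :
    prOf (RpDensity p)
        (fun ρ : ι → Option Bool => #(univ.filter fun ℓ => ρ (f ℓ) = none) < t) ≤
      2 ^ t * (1 - p / 2) ^ Fintype.card κ := by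
  simpa [Finset.filter_map, Finset.card_map] using prOf_card_free_lt_le hp0 hp1 (univ.map f) t

end RandomRestriction

lemma two_pow_mul_one_sub_half_pow_le_exp {p : ℝ} (hp : p ≤ 2) {t n : ℕ}
    (ht : (t : ℝ) ≤ p * n / 2) : 2 ^ t * (1 - p / 2) ^ n ≤ Real.exp (-(p * n / 8)) := by
  have two_le_exp : (2 : ℝ) ≤ Real.exp (3 / 4) :=
    calc (2 : ℝ) = Real.exp (Real.log 2) := (Real.exp_log two_pos).symm
      _ ≤ Real.exp (3 / 4) := Real.exp_le_exp.2 (by linarith [Real.log_two_lt_d9])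
  have half_nonneg : 0 ≤ 1 - p / 2 := by linarith
  have half_le_exp : 1 - p / 2 ≤ Real.exp (-(p / 2)) := by
    linarith [Real.add_one_le_exp (-(p / 2))]
  calc (2 : ℝ) ^ t * (1 - p / 2) ^ n ≤ Real.exp (3 / 4) ^ t * Real.exp (-(p / 2)) ^ n := by
        gcongr
    _ = Real.exp (t * (3 / 4) + n * (-(p / 2))) := by
        rw [Real.exp_add, Real.exp_nat_mul, Real.exp_nat_mul]
    _ ≤ Real.exp (-(p * n / 8)) := Real.exp_le_exp.2 (by linarith)

section Parity

variable {β : Type}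

def bparityOn (s : Finset β) (f : β → Bool) : Bool :=
  (#(s.filter fun b => f b = true)).bodd

lemma bparityOn_congr {s : Finset β} {f g : β → Bool} (h : ∀ b ∈ s, f b = g b) :
    bparityOn s f = bparityOn s g := by
  unfold bparityOn
  rw [Finset.filter_congr fun b hb => by rw [h b hb]]

lemma bparityOn_union [DecidableEq β] {s t : Finset β} (h : Disjoint s t) (f : β → Bool) :
    bparityOn (s ∪ t) f = xor (bparityOn s f) (bparityOn t f) := by
  unfold bparityOn
  rw [Finset.filter_union, Finset.card_union_of_disjoint (Finset.disjoint_filter_filter h),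
    Nat.bodd_add]

lemma bparityOn_map {α : Type} (E : α ↪ β) (s : Finset α) (f : β → Bool) :
    bparityOn (s.map E) f = bparityOn s (f ∘ E) := by
  unfold bparityOn
  rw [Finset.filter_map, Finset.card_map]
  rfl

variable [Fintype β]

lemma bparity_eq_bparityOn_univ (f : β → Bool) : bparity f = bparityOn univ f := by
  unfold bparity bparityOn
  rw [Nat.mod_two_of_bodd]
  cases Nat.bodd _ <;> decide

lemma bparity_eq_xor_bparityOn_compl [DecidableEq β] {α : Type} [Fintype α] (E : α ↪ β)
    (f : β → Bool) :
    bparity f = xor (bparity (f ∘ E)) (bparityOn (univ.map E)ᶜ f) := by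
  rw [bparity_eq_bparityOn_univ, bparity_eq_bparityOn_univ, ← bparityOn_map,
    ← bparityOn_union disjoint_compl_right, Finset.union_compl]

end Parity

lemma containsRW_restrictF_RW {m k r r' : ℕ} (ρ : Fin m × Fin (k + 1) × Fin r → Option Bool)
    (hfree : ∀ q : Fin m × Fin (k + 1), r' ≤ #(univ.filter fun ℓ => ρ (q.1, q.2, ℓ) = none)) :
    ContainsRW m k r' (restrictF (RW m k r) ρ) := by
  classical
  obtain ⟨E, hE⟩ : ∃ E : Fin m × Fin (k + 1) → Fin r' ↪ Fin r,
      ∀ q ℓ, ρ (q.1, q.2, E q ℓ) = none := by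
    choose E hE using fun q =>
      Function.Embedding.exists_of_card_le_finset (α := Fin r') (by simpa using hfree q)
    exact ⟨E, fun q ℓ => by simpa using hE q (Set.mem_range_self ℓ)⟩
  let e : Fin m × Fin (k + 1) × Fin r' → Fin m × Fin (k + 1) × Fin r :=
    fun v => (v.1, v.2.1, E (v.1, v.2.1) v.2.2)
  have he : Function.Injective e := by
    rintro ⟨i, j, ℓ⟩ ⟨i', j', ℓ'⟩ h
    simp only [e, Prod.mk.injEq] at h
    obtain ⟨rfl, rfl, h⟩ := h
    rw [(E (i, j)).injective h]
  have mem_range_e : ∀ i j ℓ, (i, j, ℓ) ∈ Set.range e ↔ ℓ ∈ univ.map (E (i, j)) := by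
    intro i j ℓ
    constructor
    · rintro ⟨⟨i', j', ℓ'⟩, h⟩
      simp only [e, Prod.mk.injEq] at h
      obtain ⟨rfl, rfl, rfl⟩ := h
      simp
    · intro h
      obtain ⟨ℓ', -, rfl⟩ := Finset.mem_map.1 h
      exact ⟨(i, j, ℓ'), rfl⟩
  let κ : Fin m × Fin (k + 1) × Fin r → Option Bool :=
    fun v => if v ∈ Set.range e then none else some false
  refine ⟨κ, e, false,
    fun q => bparityOn (univ.map (E q))ᶜ fun ℓ => (ρ (q.1, q.2, ℓ)).getD false,
    he, fun v => by by_cases h : v ∈ Set.range e <;> simp only [κ, h, ↓reduceIte, reduceCtorEq],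
    fun x => ?_⟩
  have block : ∀ i j, bparity (fun ℓ => applyR ρ (applyR κ x) (i, j, ℓ)) =
      xor (bparityOn (univ.map (E (i, j)))ᶜ fun ℓ => (ρ (i, j, ℓ)).getD false)
        (bparity fun ℓ => x (e (i, j, ℓ))) := by
    intro i j
    rw [bparity_eq_xor_bparityOn_compl (E (i, j)), Bool.xor_comm]
    congr 1
    · refine bparityOn_congr fun ℓ hℓ => ?_
      have : (i, j, ℓ) ∉ Set.range e := by rwa [mem_range_e, ← Finset.mem_compl]
      cases h : ρ (i, j, ℓ) <;>
        simp only [applyR, κ, h, this, ↓reduceIte, Option.getD_none, Option.getD_some]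
    · congr 1
      funext ℓ
      simp [applyR, κ, e, hE (i, j) ℓ]
  simp only [restrictF, RW, block, Bool.false_xor]

theorem RW_retains_copy_general (m k r : ℕ)
    (p : ℝ) (hp0 : 0 < p) (hp1 : p ≤ 1) :
    1 - (m : ℝ) * ((k : ℝ) + 1) * Real.exp (-(p * (r : ℝ) / 8)) ≤
      prOf (RpDensity p)
        (fun ρ : (Fin m × Fin (k + 1) × Fin r) → Option Bool =>
          ContainsRW m k ⌊p * (r : ℝ) / 2⌋₊ (restrictF (RW m k r) ρ)) := by
  set r' := ⌊p * (r : ℝ) / 2⌋₊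
  have hr' : (r' : ℝ) ≤ p * r / 2 := Nat.floor_le (by positivity)
  have hR := RpDensity_nonneg (ι := Fin m × Fin (k + 1) × Fin r) hp0.le hp1
  let blockFree (ρ : Fin m × Fin (k + 1) × Fin r → Option Bool) (q : Fin m × Fin (k + 1)) :=
    #(univ.filter fun ℓ => ρ (q.1, q.2, ℓ) = none)
  have bad : prOf (RpDensity p) (fun ρ => ∃ q, blockFree ρ q < r') ≤
      m * (k + 1) * Real.exp (-(p * r / 8)) :=
    calc _ ≤ ∑ q, prOf (RpDensity p) (fun ρ => blockFree ρ q < r') := prOf_exists_le_sum hR _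
      _ ≤ ∑ _q : Fin m × Fin (k + 1), Real.exp (-(p * r / 8)) := by
          refine Finset.sum_le_sum fun q _ => ?_
          have := two_pow_mul_one_sub_half_pow_le_exp (by linarith) hr'
          exact (prOf_card_free_comp_lt_le ⟨fun ℓ => (q.1, q.2, ℓ), fun ℓ ℓ' h => by simpa using h⟩
            hp0.le hp1 r').trans (by simpa using this)
      _ = m * (k + 1) * Real.exp (-(p * r / 8)) := by
          simp only [sum_const, card_univ, Fintype.card_prod, Fintype.card_fin, nsmul_eq_mul,
            Nat.cast_mul, Nat.cast_add, Nat.cast_one]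
  calc 1 - (m : ℝ) * ((k : ℝ) + 1) * Real.exp (-(p * (r : ℝ) / 8))
      ≤ 1 - prOf (RpDensity p) (fun ρ => ∃ q, blockFree ρ q < r') := by linarith
    _ = prOf (RpDensity p) (fun ρ => ¬ ∃ q, blockFree ρ q < r') :=
        (prOf_not (sum_RpDensity p) _).symm
    _ ≤ _ := prOf_mono hR fun ρ hρ =>
        containsRW_restrictF_RW ρ fun q => not_lt.1 (not_exists.1 hρ q)

/-- **Corollary 4.2 (`RW` retains a copy of itself under `R_p`).** Let `m,k,r`
be positive, `n = m(k+1)r`, and `p ∈ (0,1]` with `p·r/2 ≥ 1`. Then with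
probability at least `1 - m·(k+1)·exp(-p·r/8)` over `ρ ← R_p`, the function
`RW_{m,k,r}↾ρ` contains a perfect copy of `RW_{m,k,r'}` with `r' = ⌊p·r/2⌋`. -/
theorem RW_retains_copy (m k r : ℕ) (hm : 0 < m) (hk : 0 < k) (hr : 0 < r)
    (p : ℝ) (hp0 : 0 < p) (hp1 : p ≤ 1) (hpr : 1 ≤ p * (r : ℝ) / 2) :
    1 - (m : ℝ) * ((k : ℝ) + 1) * Real.exp (-(p * (r : ℝ) / 8)) ≤
      prOf (RpDensity p)
        (fun ρ : (Fin m × Fin (k + 1) × Fin r) → Option Bool =>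
          ContainsRW m k ⌊p * (r : ℝ) / 2⌋₊ (restrictF (RW m k r) ρ)) :=
  RW_retains_copy_general m k r p hp0 hp1
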